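/- Fix integers $l,m\ge1$ and $j\ge0$. Let the matrix $C$ over $F$ have rows indexed by all tuples $(s,\boldsymbol{l},\boldsymbol{m},\boldsymbol{j})$ with $s\in\{1,\dots,n\}$ and $(\boldsymbol{l},\boldsymbol{m},\boldsymbol{j})$ admissible with $\sum_t j_t=j$, columns indexed by all admissible $(\boldsymbol{l}',\boldsymbol{m}',\boldsymbol{j}')$ with $\sum_t j'_t=j+1$, and entry in row $(s,\boldsymbol{l},\boldsymbol{m},\boldsymbol{j})$ and column $(\boldsymbol{l}',\boldsymbol{m}',\boldsymbol{j}')$ equal to $A_1$ if $(\boldsymbol{l}',\boldsymbol{m}',\boldsymbol{j}')=(\boldsymbol{l}-\boldsymbol{e}_s+\boldsymbol{e}_{s+1},\boldsymbol{m},\boldsymbol{j}+\boldsymbol{e}_{s+1})$, to $A_2$ if $=(\boldsymbol{l},\boldsymbol{m}-\boldsymbol{e}_s+\boldsymbol{e}_{s+1},\boldsymbol{j}+\boldsymbol{e}_{s+1})$, to $A_3$ if $=(\boldsymbol{l}+\boldsymbol{e}_s-\boldsymbol{e}_{s+1},\boldsymbol{m},\boldsymbol{j}+\boldsymbol{e}_s)$,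 to $A_4$ if $=(\boldsymbol{l},\boldsymbol{m}+\boldsymbol{e}_s-\boldsymbol{e}_{s+1},\boldsymbol{j}+\boldsymbol{e}_s)$, and to $0$ otherwise (indices of $n$-vectors read mod $n$; the $A_t$ computed from the row's data $s,\boldsymbol{l},\boldsymbol{m},\boldsymbol{j}$). Then $C$ has full column rank, i.e. its rank equals the number of admissible triples $(\boldsymbol{l}',\boldsymbol{m}',\boldsymbol{j}')$ with $\sum_t j'_t=j+1$. -/

import Mathlib

/- Common setup: the quantum affine algebra U_q(A^{(1)}_{2n-1}) acting on symmetric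
tensor representations V_{l,x} and their duals, coideal operators b_i, tensor products,
and the K matrix, following Kusano-Okado. -/

noncomputable section
namespace AII

open scoped TensorProduct Classical
open Finset

/-- The base field F = ℚ(q). -/
abbrev F : Type := RatFunc ℚ

/-- The quantum parameter q. -/
def qq : F := RatFunc.X

/-- Quantum integer [a] = (q^a - q^{-a})/(q - q⁻¹). -/
def qint (a : ℤ) : F := (qq ^ a - qq ^ (-a)) / (qq - qq⁻¹)

/-- Quantum factorial [a]!. -/
def qfact (a : ℕ) : F := ∏ k ∈ Finset.range a, qint (k + 1)

/-- Quantum binomial coefficient. -/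
def qbinom (j p : ℕ) : F := qfact j / (qfact p * qfact (j - p))

instance (n : ℕ) [NeZero n] : NeZero (2 * n) := ⟨by have := NeZero.ne n; omega⟩

/-- Helper instance: zero of a tensor product (works around a stuck instance search). -/
noncomputable instance {R M N : Type*} [CommSemiring R] [AddCommMonoid M] [Module R M]
    [AddCommMonoid N] [Module R N] : Zero (TensorProduct R M N) :=
  (inferInstance : AddCommMonoid (TensorProduct R M N)).toZero

/-- Index set ℤ/2n for nodes of the Dynkin diagram / entries of weight vectors. -/
abbrev Zn (n : ℕ) := ZMod (2 * n)

/-- Membership in B_l : all entries nonnegative and summing to l. -/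
def inB (n : ℕ) [NeZero n] (l : ℕ) (α : Zn n → ℤ) : Prop :=
  (∀ i, 0 ≤ α i) ∧ (∑ i, α i) = (l : ℤ)

/-- The vector space V_{l} with basis indexed by B_l. -/
abbrev V (n : ℕ) [NeZero n] (l : ℕ) := {α : Zn n → ℤ // inB n l α} →₀ F

/-- Basis vector v_α, with the convention that it is 0 if α ∉ B_l
(in particular if α has a negative entry). -/
def vB (n : ℕ) [NeZero n] (l : ℕ) (α : Zn n → ℤ) : V n l :=
  if h : inB n l α then Finsupp.single ⟨α, h⟩ 1 else 0

/-- Helper: the linear operator sending v_α ↦ c(α) • v_{sh(α)}. -/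
def opOf (n : ℕ) [NeZero n] (l : ℕ) (c : (Zn n → ℤ) → F)
    (sh : (Zn n → ℤ) → (Zn n → ℤ)) : V n l →ₗ[F] V n l :=
  Finsupp.lsum F fun a => LinearMap.toSpanSingleton F (V n l) (c a.1 • vB n l (sh a.1))

/-- The i-th standard unit vector e_i of ℤ^{2n}. -/
def eu (n : ℕ) [NeZero n] (i : Zn n) : Zn n → ℤ := fun j => if j = i then 1 else 0

/-- Chevalley generator e_i on V_{l,x}. -/
def eOp (n : ℕ) [NeZero n] (l : ℕ) (x : F) (i : Zn n) : V n l →ₗ[F] V n l :=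
  opOf n l (fun α => (if i = 0 then x else 1) * qint (α (i + 1)))
    (fun α => α + eu n i - eu n (i + 1))

/-- Chevalley generator f_i on V_{l,x}. -/
def fOp (n : ℕ) [NeZero n] (l : ℕ) (x : F) (i : Zn n) : V n l →ₗ[F] V n l :=
  opOf n l (fun α => (if i = 0 then x⁻¹ else 1) * qint (α i))
    (fun α => α - eu n i + eu n (i + 1))

/-- Cartan generator k_i on V_{l,x}. -/
def kOp (n : ℕ) [NeZero n] (l : ℕ) (i : Zn n) : V n l →ₗ[F] V n l :=
  opOf n l (fun α => qq ^ (α i - α (i + 1))) id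

/-- Inverse Cartan generator k_i⁻¹ on V_{l,x}. -/
def kInvOp (n : ℕ) [NeZero n] (l : ℕ) (i : Zn n) : V n l →ₗ[F] V n l :=
  opOf n l (fun α => qq ^ (-(α i - α (i + 1)))) id

/-- e_i on the dual representation V^*_{l,x}. -/
def eSOp (n : ℕ) [NeZero n] (l : ℕ) (x : F) (i : Zn n) : V n l →ₗ[F] V n l :=
  opOf n l (fun α => (if i = 0 then x else 1) * qint (α i))
    (fun α => α - eu n i + eu n (i + 1))

/-- f_i on the dual representation V^*_{l,x}. -/
def fSOp (n : ℕ) [NeZero n] (l : ℕ) (x : F) (i : Zn n) : V n l →ₗ[F] V n l :=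
  opOf n l (fun α => (if i = 0 then x⁻¹ else 1) * qint (α (i + 1)))
    (fun α => α + eu n i - eu n (i + 1))

/-- k_i on the dual representation V^*_{l,x}. -/
def kSOp (n : ℕ) [NeZero n] (l : ℕ) (i : Zn n) : V n l →ₗ[F] V n l :=
  opOf n l (fun α => qq ^ (-(α i - α (i + 1)))) id

/-- k_i⁻¹ on the dual representation V^*_{l,x}. -/
def kSInvOp (n : ℕ) [NeZero n] (l : ℕ) (i : Zn n) : V n l →ₗ[F] V n l :=
  opOf n l (fun α => qq ^ (α i - α (i + 1))) id

/-- The coideal generator b_i built from families of operators e, f, k⁻¹: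
b_i = f_i + γ_i (e_{i+1}e_{i-1}e_i - q⁻¹(e_{i+1}e_ie_{i-1}+e_{i-1}e_ie_{i+1})
  + q⁻²e_ie_{i-1}e_{i+1}) k_i⁻¹. -/
def bOf (n : ℕ) [NeZero n] {M : Type*} [AddCommMonoid M] [Module F M]
    (e f kinv : Zn n → (M →ₗ[F] M)) (γ : Zn n → F) (i : Zn n) : M →ₗ[F] M :=
  f i + γ i • ((e (i + 1) ∘ₗ e (i - 1) ∘ₗ e i
      + (-qq⁻¹) • (e (i + 1) ∘ₗ e i ∘ₗ e (i - 1) + e (i - 1) ∘ₗ e i ∘ₗ e (i + 1))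
      + (qq ^ (-2 : ℤ)) • (e i ∘ₗ e (i - 1) ∘ₗ e (i + 1))) ∘ₗ kinv i)

/-- b_i on V_{l,x}. -/
def bOp (n : ℕ) [NeZero n] (l : ℕ) (x : F) (γ : Zn n → F) (i : Zn n) :
    V n l →ₗ[F] V n l :=
  bOf n (fun j => eOp n l x j) (fun j => fOp n l x j) (fun j => kInvOp n l j) γ i

/-- b_i on V^*_{l,x}. -/
def bSOp (n : ℕ) [NeZero n] (l : ℕ) (x : F) (γ : Zn n → F) (i : Zn n) :
    V n l →ₗ[F] V n l :=
  bOf n (fun j => eSOp n l x j) (fun j => fSOp n l x j) (fun j => kSInvOp n l j) γ i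

/-- Coproduct action of e: E = e ⊗ 1 + k ⊗ e. -/
def coE {M N : Type*} [AddCommGroup M] [Module F M] [AddCommGroup N] [Module F N]
    (e1 k1 : M →ₗ[F] M) (e2 : N →ₗ[F] N) : M ⊗[F] N →ₗ[F] M ⊗[F] N :=
  TensorProduct.map e1 LinearMap.id + TensorProduct.map k1 e2

/-- Coproduct action of f: F = f ⊗ k⁻¹ + 1 ⊗ f. -/
def coF {M N : Type*} [AddCommGroup M] [Module F M] [AddCommGroup N] [Module F N]
    (f1 : M →ₗ[F] M) (kinv2 f2 : N →ₗ[F] N) : M ⊗[F] N →ₗ[F] M ⊗[F] N :=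
  TensorProduct.map f1 kinv2 + TensorProduct.map LinearMap.id f2

/-- Coproduct action of k^{±1}: K = k ⊗ k. -/
def coK {M N : Type*} [AddCommGroup M] [Module F M] [AddCommGroup N] [Module F N]
    (k1 : M →ₗ[F] M) (k2 : N →ₗ[F] N) : M ⊗[F] N →ₗ[F] M ⊗[F] N :=
  TensorProduct.map k1 k2

/-- A bundle of operator families (e_i, f_i, k_i, k_i⁻¹) on a module. -/
structure Ops (n : ℕ) [NeZero n] (M : Type*) [AddCommGroup M] [Module F M] where
  e : Zn n → M →ₗ[F] M
  f : Zn n → M →ₗ[F] M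
  k : Zn n → M →ₗ[F] M
  kinv : Zn n → M →ₗ[F] M

/-- The operator bundle of V_{l,x}. -/
def VOps (n : ℕ) [NeZero n] (l : ℕ) (x : F) : Ops n (V n l) :=
  ⟨fun i => eOp n l x i, fun i => fOp n l x i, fun i => kOp n l i, fun i => kInvOp n l i⟩

/-- The operator bundle of V^*_{l,x}. -/
def VSOps (n : ℕ) [NeZero n] (l : ℕ) (x : F) : Ops n (V n l) :=
  ⟨fun i => eSOp n l x i, fun i => fSOp n l x i, fun i => kSOp n l i, fun i => kSInvOp n l i⟩

/-- Coproduct operator bundle on a tensor product of two representations. -/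
def tensorOps {n : ℕ} [NeZero n] {M N : Type*} [AddCommGroup M] [Module F M]
    [AddCommGroup N] [Module F N] (A : Ops n M) (B : Ops n N) : Ops n (M ⊗[F] N) where
  e := fun i => coE (A.e i) (A.k i) (B.e i)
  f := fun i => coF (A.f i) (B.kinv i) (B.f i)
  k := fun i => coK (A.k i) (B.k i)
  kinv := fun i => coK (A.kinv i) (B.kinv i)

/-- R intertwines the bundles A and B: R ∘ a = a ∘ R for all generators. -/
def Intertwines {n : ℕ} [NeZero n] {M N : Type*} [AddCommGroup M] [Module F M]
    [AddCommGroup N] [Module F N] (A : Ops n M) (B : Ops n N) (R : M →ₗ[F] N) : Prop :=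
  ∀ i : Zn n, R ∘ₗ A.e i = B.e i ∘ₗ R ∧ R ∘ₗ A.f i = B.f i ∘ₗ R ∧
    R ∘ₗ A.k i = B.k i ∘ₗ R ∧ R ∘ₗ A.kinv i = B.kinv i ∘ₗ R

/-- E_i on V_{l,x} ⊗ V_{m,y}. -/
def tE (n : ℕ) [NeZero n] (l m : ℕ) (x y : F) (i : Zn n) :
    V n l ⊗[F] V n m →ₗ[F] V n l ⊗[F] V n m := (tensorOps (VOps n l x) (VOps n m y)).e i

/-- F_i on V_{l,x} ⊗ V_{m,y}. -/
def tF (n : ℕ) [NeZero n] (l m : ℕ) (x y : F) (i : Zn n) :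
    V n l ⊗[F] V n m →ₗ[F] V n l ⊗[F] V n m := (tensorOps (VOps n l x) (VOps n m y)).f i

/-- K_i on V_{l,x} ⊗ V_{m,y}. -/
def tK (n : ℕ) [NeZero n] (l m : ℕ) (x y : F) (i : Zn n) :
    V n l ⊗[F] V n m →ₗ[F] V n l ⊗[F] V n m := (tensorOps (VOps n l x) (VOps n m y)).k i

/-- K_i⁻¹ on V_{l,x} ⊗ V_{m,y}. -/
def tKInv (n : ℕ) [NeZero n] (l m : ℕ) (x y : F) (i : Zn n) :
    V n l ⊗[F] V n m →ₗ[F] V n l ⊗[F] V n m := (tensorOps (VOps n l x) (VOps n m y)).kinv i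

/-- B_i on V_{l,x} ⊗ V_{m,y}. -/
def tB (n : ℕ) [NeZero n] (l m : ℕ) (x y : F) (γ : Zn n → F) (i : Zn n) :
    V n l ⊗[F] V n m →ₗ[F] V n l ⊗[F] V n m :=
  bOf n (fun j => tE n l m x y j) (fun j => tF n l m x y j) (fun j => tKInv n l m x y j) γ i

/-- The entry permutation σ^{(ε)}: switches α_{i-1} and α_i whenever i ≡ ε (mod 2),
i.e. pairs {ε+2k-1, ε+2k}. -/
def sigmaPerm (n : ℕ) [NeZero n] (ε : ℕ) (j : Zn n) : Zn n :=
  if (j - (ε : Zn n)).val % 2 = 1 then j + 1 else j - 1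

/-- Action of σ^{(ε)} on entry vectors. -/
def sigmaAct (n : ℕ) [NeZero n] (ε : ℕ) (α : Zn n → ℤ) : Zn n → ℤ :=
  fun j => α (sigmaPerm n ε j)

/-- The coefficient of the K matrix:
x^{ε(α_1-α_{2n})} ∏_{j=ε,ε+2,…,ε+2n-2} (-q⁻¹γ_j)^{-∑_{i=ε+1}^{j} α_i}. -/
def Kcoef (n : ℕ) [NeZero n] (x : F) (γ : Zn n → F) (ε : ℕ) (α : Zn n → ℤ) : F :=
  x ^ ((ε : ℤ) * (α 1 - α 0)) *
    ∏ k ∈ Finset.range n,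
      (-qq⁻¹ * γ ((ε : Zn n) + 2 * (k : Zn n))) ^
        (-(∑ r ∈ Finset.range (2 * k), α ((ε : Zn n) + 1 + (r : Zn n))))

/-- The explicit K matrix K(x) : V_{l,x} → V^*_{l,x⁻¹},
v_α ↦ Kcoef(α) v^*_{σ^{(ε)}(α)}. -/
def Kmap (n : ℕ) [NeZero n] (l : ℕ) (x : F) (γ : Zn n → F) (ε : ℕ) :
    V n l →ₗ[F] V n l :=
  opOf n l (fun α => Kcoef n x γ ε α) (sigmaAct n ε)

/-- The simplified K matrix (for γ_j = -q): v_α ↦ x^{ε(α_1-α_{2n})} v^*_{σ^{(ε)}(α)}. -/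
def KmapS (n : ℕ) [NeZero n] (l : ℕ) (x : F) (ε : ℕ) : V n l →ₗ[F] V n l :=
  opOf n l (fun α => x ^ ((ε : ℤ) * (α 1 - α 0))) (sigmaAct n ε)

/-- Cartan matrix of A^{(1)}_{2n-1}: a_{ij} = 2δ_{ij} - δ_{i,j+1} - δ_{i,j-1}. -/
def cartan (n : ℕ) [NeZero n] (i j : Zn n) : ℤ :=
  (if i = j then 2 else 0) - (if i = j + 1 then 1 else 0) - (if i = j - 1 then 1 else 0)

/- ### sl2 representations U_l -/

/-- The (l+1)-dimensional irreducible U_q(sl_2)-module U_l. -/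
abbrev UL (l : ℕ) := {p : ℕ × ℕ // p.1 + p.2 = l} →₀ F

/-- Basis vector u_{(a,b)} of U_l, zero when out of range. -/
def uB (l : ℕ) (a b : ℤ) : UL l :=
  if h : 0 ≤ a ∧ 0 ≤ b ∧ a.toNat + b.toNat = l then Finsupp.single ⟨(a.toNat, b.toNat), h.2.2⟩ 1
  else 0

/-- Helper for sl2 operators. -/
def slOf (l : ℕ) (c : ℕ × ℕ → F) (sh : ℕ × ℕ → ℤ × ℤ) : UL l →ₗ[F] UL l :=
  Finsupp.lsum F fun a => LinearMap.toSpanSingleton F (UL l) (c a.1 • uB l (sh a.1).1 (sh a.1).2)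

/-- e on U_l : u_{(a,b)} ↦ [b]u_{(a+1,b-1)}. -/
def esl (l : ℕ) : UL l →ₗ[F] UL l :=
  slOf l (fun p => qint p.2) (fun p => ((p.1 : ℤ) + 1, (p.2 : ℤ) - 1))

/-- f on U_l : u_{(a,b)} ↦ [a]u_{(a-1,b+1)}. -/
def fsl (l : ℕ) : UL l →ₗ[F] UL l :=
  slOf l (fun p => qint p.1) (fun p => ((p.1 : ℤ) - 1, (p.2 : ℤ) + 1))

/-- k on U_l. -/
def ksl (l : ℕ) : UL l →ₗ[F] UL l :=
  slOf l (fun p => qq ^ ((p.1 : ℤ) - (p.2 : ℤ))) (fun p => ((p.1 : ℤ), (p.2 : ℤ)))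

/-- k⁻¹ on U_l. -/
def kslInv (l : ℕ) : UL l →ₗ[F] UL l :=
  slOf l (fun p => qq ^ (-((p.1 : ℤ) - (p.2 : ℤ)))) (fun p => ((p.1 : ℤ), (p.2 : ℤ)))

/-- The highest weight vector w^{(l,m)}_j of U_{l+m-2j} ⊂ U_l ⊗ U_m. -/
def wsl (l m j : ℕ) : UL l ⊗[F] UL m :=
  ∑ p ∈ Finset.range (j + 1),
    ((-1 : F) ^ p * qq ^ ((p : ℤ) * ((l : ℤ) - p + 1)) * qbinom j p) •
      (uB l ((l : ℤ) - p) p ⊗ₜ[F] uB m ((m : ℤ) - j + p) ((j : ℤ) - p))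

/- ### The U(I_•)-highest weight vectors of V_l ⊗ V_m -/

open Fin.NatCast in
/-- The index t ∈ {1,…,n} (0-based, in Fin n) of the sl2-pair containing
the entry position i : the pairs are {2t-1, 2t}. -/
def pairIdx (n : ℕ) [NeZero n] (i : Zn n) : Fin n :=
  if i.val % 2 = 1 then ((i.val / 2 : ℕ) : Fin n) else (((i.val + 2 * n - 2) / 2 : ℕ) : Fin n)

/-- The entry vector α with α_{2t-1} = l_t - p_t, α_{2t} = p_t. -/
def alphaOf (n : ℕ) [NeZero n] (bl : Fin n → ℤ) (p : Fin n → ℕ) : Zn n → ℤ :=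
  fun i => if i.val % 2 = 1 then bl (pairIdx n i) - p (pairIdx n i) else (p (pairIdx n i) : ℤ)

/-- The entry vector β with β_{2t-1} = m_t - j_t + p_t, β_{2t} = j_t - p_t. -/
def betaOf (n : ℕ) [NeZero n] (bm bj : Fin n → ℤ) (p : Fin n → ℕ) : Zn n → ℤ :=
  fun i => if i.val % 2 = 1 then bm (pairIdx n i) - bj (pairIdx n i) + p (pairIdx n i)
    else bj (pairIdx n i) - p (pairIdx n i)

/-- Admissibility of a triple (𝒍, 𝒎, 𝒋). -/
def adm (n : ℕ) [NeZero n] (l m : ℕ) (bl bm bj : Fin n → ℤ) : Prop :=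
  (∀ t, 0 ≤ bl t) ∧ (∀ t, 0 ≤ bm t) ∧ (∑ t, bl t) = (l : ℤ) ∧ (∑ t, bm t) = (m : ℤ) ∧
    (∀ t, 0 ≤ bj t ∧ bj t ≤ min (bl t) (bm t))

/-- The U(I_•)-highest weight vector 𝒘^{(𝒍,𝒎)}_𝒋 ∈ V_{l,1} ⊗ V_{m,1},
zero when the triple is not admissible. -/
def wbig (n : ℕ) [NeZero n] (l m : ℕ) (bl bm bj : Fin n → ℤ) : V n l ⊗[F] V n m :=
  if adm n l m bl bm bj then
    ∑ p ∈ Fintype.piFinset (fun t => Finset.range ((bj t).toNat + 1)),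
      (∏ t, ((-1 : F) ^ (p t) * qq ^ ((p t : ℤ) * (bl t - p t + 1)) * qbinom (bj t).toNat (p t))) •
        (vB n l (alphaOf n bl p) ⊗ₜ[F] vB n m (betaOf n bm bj p))
  else (0 : V n l ⊗[F] V n m)

/-- The s-th standard unit vector of ℤ^n. -/
def eun (n : ℕ) [NeZero n] (s : Fin n) : Fin n → ℤ := fun t => if t = s then 1 else 0

/-- The Dynkin index i = 2s ∈ ℤ/2n attached to s ∈ {1,…,n} (s 0-based in Fin n). -/
def iZ (n : ℕ) [NeZero n] (s : Fin n) : Zn n := ((2 * s.val + 2 : ℕ) : Zn n)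

/- ### Coefficients from Propositions 4.3–4.5 -/


def cD1 (n : ℕ) [NeZero n] (bl bm bj : Fin n → ℤ) (s : Fin n) : F := -(qq ^ (-(bj s) - bj (s+1) + bl s + bm (s+1) + 1) * qint (bj s))
def cD2 (n : ℕ) [NeZero n] (bl bm bj : Fin n → ℤ) (s : Fin n) : F := qint (bj s)
def cD3 (n : ℕ) [NeZero n] (bl bm bj : Fin n → ℤ) (s : Fin n) : F := -(qq ^ (-(bj s) - bj (s+1) + bl (s+1) + bm (s+1) + 1) * qint (bj (s+1)))
def cD4 (n : ℕ) [NeZero n] (bl bm bj : Fin n → ℤ) (s : Fin n) : F := qq ^ (-2 * bj s - 2 * bj (s+1) + bl s + bl (s+1) + 2 * bm (s+1) + 2) * qint (bj (s+1))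

def cB1 (n : ℕ) [NeZero n] (bl bm bj : Fin n → ℤ) (s : Fin n) : F := qq ^ (bj s - bj (s+1) - bm s + bm (s+1)) * qint (bl s - bj s)
def cB2 (n : ℕ) [NeZero n] (bl bm bj : Fin n → ℤ) (s : Fin n) : F := qint (bm s - bj s)
def cB3 (n : ℕ) [NeZero n] (bl bm bj : Fin n → ℤ) (s : Fin n) : F := -(qq ^ (bj s - bj (s+1) - bl s - bm s + bl (s+1) + bm (s+1)) * qint (bm s - bj s))
def cB4 (n : ℕ) [NeZero n] (bl bm bj : Fin n → ℤ) (s : Fin n) : F := -(qq ^ (2 * bj s - 2 * bj (s+1) - bl s - 2 * bm s + bl (s+1) + 2 * bm (s+1)) * qint (bl s - bj s))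

def cC1 (n : ℕ) [NeZero n] (bl bm bj : Fin n → ℤ) (s : Fin n) : F := -(qq ^ (-(bj s) + bj (s+1) + bl s - bl (s+1)) * qint (bm (s+1) - bj (s+1)))
def cC2 (n : ℕ) [NeZero n] (bl bm bj : Fin n → ℤ) (s : Fin n) : F := -qint (bl (s+1) - bj (s+1))
def cC3 (n : ℕ) [NeZero n] (bl bm bj : Fin n → ℤ) (s : Fin n) : F := qq ^ (-(bj s) + bj (s+1)) * qint (bl (s+1) - bj (s+1))
def cC4 (n : ℕ) [NeZero n] (bl bm bj : Fin n → ℤ) (s : Fin n) : F := qq ^ (-2 * bj s + 2 * bj (s+1) + bl s - bl (s+1)) * qint (bm (s+1) - bj (s+1))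

/-- The denominator N = [l_s+m_s-2j_s+1][l_{s+1}+m_{s+1}-2j_{s+1}+1]. -/
def cN (n : ℕ) [NeZero n] (bl bm bj : Fin n → ℤ) (s : Fin n) : F := qint (bl s + bm s - 2 * bj s + 1) * qint (bl (s+1) + bm (s+1) - 2 * bj (s+1) + 1)


/-- A_1 as a function of the six integers l_s, l_{s+1}, m_s, m_{s+1}, j_s, j_{s+1}. -/
def sA1 (ls ls1 ms ms1 js js1 : ℤ) : F :=
  qq ^ (js + js1 - ls1 - ms - 1) * qint (ls - js) * qint (ms1 - js1) * qint (ls + ms - js + 1)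
    / (qint (ls + ms - 2 * js + 1) * qint (ls1 + ms1 - 2 * js1 + 1))

def sA2 (ls ls1 ms ms1 js js1 : ℤ) : F :=
  -(qint (ls1 - js1) * qint (ms - js) * qint (ls + ms - js + 1))
    / (qint (ls + ms - 2 * js + 1) * qint (ls1 + ms1 - 2 * js1 + 1))

def sA3 (ls ls1 ms ms1 js js1 : ℤ) : F :=
  qq ^ (js + js1 - ls - ms - 1) * qint (ls1 - js1) * qint (ms - js) * qint (ls1 + ms1 - js1 + 1)
    / (qint (ls + ms - 2 * js + 1) * qint (ls1 + ms1 - 2 * js1 + 1))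

def sA4 (ls ls1 ms ms1 js js1 : ℤ) : F :=
  -(qq ^ (2 * js + 2 * js1 - ls - ls1 - 2 * ms - 2) * qint (ls - js) * qint (ms1 - js1)
      * qint (ls1 + ms1 - js1 + 1))
    / (qint (ls + ms - 2 * js + 1) * qint (ls1 + ms1 - 2 * js1 + 1))


def cA1 (n : ℕ) [NeZero n] (bl bm bj : Fin n → ℤ) (s : Fin n) : F := sA1 (bl s) (bl (s+1)) (bm s) (bm (s+1)) (bj s) (bj (s+1))
def cA2 (n : ℕ) [NeZero n] (bl bm bj : Fin n → ℤ) (s : Fin n) : F := sA2 (bl s) (bl (s+1)) (bm s) (bm (s+1)) (bj s) (bj (s+1))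
def cA3 (n : ℕ) [NeZero n] (bl bm bj : Fin n → ℤ) (s : Fin n) : F := sA3 (bl s) (bl (s+1)) (bm s) (bm (s+1)) (bj s) (bj (s+1))
def cA4 (n : ℕ) [NeZero n] (bl bm bj : Fin n → ℤ) (s : Fin n) : F := sA4 (bl s) (bl (s+1)) (bm s) (bm (s+1)) (bj s) (bj (s+1))

def cBB1 (n : ℕ) [NeZero n] (bl bm bj : Fin n → ℤ) (s : Fin n) : F := cB1 n bl bm bj s * qint (bl s + bm s - bj s + 1)
  * qint (bl (s+1) + bm (s+1) - 2 * bj (s+1)) / cN n bl bm bj s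
def cBB2 (n : ℕ) [NeZero n] (bl bm bj : Fin n → ℤ) (s : Fin n) : F := cB2 n bl bm bj s * qint (bl s + bm s - bj s + 1)
  * qint (bl (s+1) + bm (s+1) - 2 * bj (s+1)) / cN n bl bm bj s
def cBB3 (n : ℕ) [NeZero n] (bl bm bj : Fin n → ℤ) (s : Fin n) : F := cB3 n bl bm bj s * qint (bj (s+1))
  * qint (bl (s+1) + bm (s+1) - 2 * bj (s+1)) / cN n bl bm bj s
def cBB4 (n : ℕ) [NeZero n] (bl bm bj : Fin n → ℤ) (s : Fin n) : F := cB4 n bl bm bj s * qint (bj (s+1))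
  * qint (bl (s+1) + bm (s+1) - 2 * bj (s+1)) / cN n bl bm bj s

def cCC1 (n : ℕ) [NeZero n] (bl bm bj : Fin n → ℤ) (s : Fin n) : F := cC1 n bl bm bj s * qint (bj s) * qint (bl s + bm s - 2 * bj s) / cN n bl bm bj s
def cCC2 (n : ℕ) [NeZero n] (bl bm bj : Fin n → ℤ) (s : Fin n) : F := cC2 n bl bm bj s * qint (bj s) * qint (bl s + bm s - 2 * bj s) / cN n bl bm bj s
def cCC3 (n : ℕ) [NeZero n] (bl bm bj : Fin n → ℤ) (s : Fin n) : F := cC3 n bl bm bj s * qint (bl s + bm s - 2 * bj s)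
  * qint (bl (s+1) + bm (s+1) - bj (s+1) + 1) / cN n bl bm bj s
def cCC4 (n : ℕ) [NeZero n] (bl bm bj : Fin n → ℤ) (s : Fin n) : F := cC4 n bl bm bj s * qint (bl s + bm s - 2 * bj s)
  * qint (bl (s+1) + bm (s+1) - bj (s+1) + 1) / cN n bl bm bj s

def cDD1 (n : ℕ) [NeZero n] (bl bm bj : Fin n → ℤ) (s : Fin n) : F := cD1 n bl bm bj s * qint (bl s + bm s - 2 * bj s)
  * qint (bl (s+1) + bm (s+1) - 2 * bj (s+1)) / cN n bl bm bj s
def cDD2 (n : ℕ) [NeZero n] (bl bm bj : Fin n → ℤ) (s : Fin n) : F := cD2 n bl bm bj s * qint (bl s + bm s - 2 * bj s)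
  * qint (bl (s+1) + bm (s+1) - 2 * bj (s+1)) / cN n bl bm bj s
def cDD3 (n : ℕ) [NeZero n] (bl bm bj : Fin n → ℤ) (s : Fin n) : F := cD3 n bl bm bj s * qint (bl s + bm s - 2 * bj s)
  * qint (bl (s+1) + bm (s+1) - 2 * bj (s+1)) / cN n bl bm bj s
def cDD4 (n : ℕ) [NeZero n] (bl bm bj : Fin n → ℤ) (s : Fin n) : F := cD4 n bl bm bj s * qint (bl s + bm s - 2 * bj s)
  * qint (bl (s+1) + bm (s+1) - 2 * bj (s+1)) / cN n bl bm bj s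


/-- The entry of the matrix C of Proposition 4.8, for row data (s, 𝒍, 𝒎, 𝒋)
and column data (𝒍', 𝒎', 𝒋'). -/
def Centry (n : ℕ) [NeZero n] (s : Fin n) (bl bm bj bl' bm' bj' : Fin n → ℤ) : F :=
  if bl' = bl - eun n s + eun n (s + 1) ∧ bm' = bm ∧ bj' = bj + eun n (s + 1) then
    cA1 n bl bm bj s
  else if bl' = bl ∧ bm' = bm - eun n s + eun n (s + 1) ∧ bj' = bj + eun n (s + 1) then
    cA2 n bl bm bj s
  else if bl' = bl + eun n s - eun n (s + 1) ∧ bm' = bm ∧ bj' = bj + eun n s then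
    cA3 n bl bm bj s
  else if bl' = bl ∧ bm' = bm + eun n s - eun n (s + 1) ∧ bj' = bj + eun n s then
    cA4 n bl bm bj s
  else 0

/-- f ∈ ℚ(q) is regular at q = 0 and vanishes there (i.e. f ∈ qA). -/
def vanishesAt0 (f : F) : Prop :=
  ∃ a b : Polynomial ℚ, Polynomial.eval 0 b ≠ 0 ∧ Polynomial.eval 0 a = 0 ∧
    f = algebraMap (Polynomial ℚ) F a / algebraMap (Polynomial ℚ) F b

end AII

/-!
The columns are separated by their leading degree in `q`. Since `[a]` has degree `a - 1`, every
entry `A_t` is `±q^e` times a ratio of `q`-integers whose degree is explicit. Weight a column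
`(𝒍, 𝒎, 𝒋)` by `ψ = ∑_t (2 j_t (l_t + m_t) - 2 j_t² - l_t m_t)`. If `j_{s+1} > 0`, the column is
the `A_2`-neighbour of the admissible row `(s, 𝒍, 𝒎 + 𝒆_s - 𝒆_{s+1}, 𝒋 - 𝒆_{s+1})`, and in that
row every other nonzero entry `C` has `deg C + ψ(its column)` strictly below that of the
`A_2`-entry. So in a nontrivial vanishing combination `∑ λ_c C_c`, a column maximizing
`deg λ_c - ψ(c)` yields a row in which exactly one term has maximal degree, and that row cannot
vanish.
-/

namespace RatFunc

variable {K : Type*} [Field K]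

lemma intDegree_add_lt {x y : RatFunc K} {D : ℤ} (hx : x ≠ 0 → x.intDegree < D)
    (hy : y ≠ 0 → y.intDegree < D) (hxy : x + y ≠ 0) : (x + y).intDegree < D := by
  by_cases hy0 : y = 0
  · simp_all
  by_cases hx0 : x = 0
  · simp_all
  have := intDegree_add_le hy0 hxy
  have := hx hx0
  have := hy hy0
  omega

lemma intDegree_sum_lt {ι : Type*} {S : Finset ι} {f : ι → RatFunc K} {D : ℤ}
    (h : ∀ i ∈ S, f i ≠ 0 → (f i).intDegree < D) :
    ∑ i ∈ S, f i ≠ 0 → (∑ i ∈ S, f i).intDegree < D :=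
  Finset.sum_induction f (fun x => x ≠ 0 → x.intDegree < D)
    (fun _ _ hx hy => intDegree_add_lt hx hy) (fun h => absurd rfl h) h

lemma add_ne_zero_of_intDegree_lt {x y : RatFunc K} (hx : x ≠ 0)
    (hy : y ≠ 0 → y.intDegree < x.intDegree) : x + y ≠ 0 := by
  intro hxy
  have hyx : y = -x := by linear_combination hxy
  have := hy (by simpa [hyx] using hx)
  simp [hyx] at this

lemma intDegree_add_eq_left_of_lt {x y : RatFunc K} (hx : x ≠ 0)
    (hy : y ≠ 0 → y.intDegree < x.intDegree) : (x + y).intDegree = x.intDegree := by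
  have hxy := add_ne_zero_of_intDegree_lt hx hy
  refine le_antisymm (Int.lt_add_one_iff.mp <|
    intDegree_add_lt (by omega) (fun h => (hy h).trans (lt_add_one _)) hxy) ?_
  by_contra! hlt
  have : (x + y + -y).intDegree < x.intDegree :=
    intDegree_add_lt (fun _ => hlt) (by simpa using hy) (by simpa using hx)
  simp at this

lemma sum_ne_zero_of_intDegree_lt {ι : Type*} [DecidableEq ι] {S : Finset ι}
    {f : ι → RatFunc K} {c : ι} (hc : c ∈ S) (hfc : f c ≠ 0)
    (h : ∀ i ∈ S, i ≠ c → f i ≠ 0 → (f i).intDegree < (f c).intDegree) :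
    ∑ i ∈ S, f i ≠ 0 := by
  rw [← Finset.add_sum_erase S f hc]
  exact add_ne_zero_of_intDegree_lt hfc <| intDegree_sum_lt fun i hi =>
    h i (Finset.mem_of_mem_erase hi) (Finset.ne_of_mem_erase hi)

theorem linearIndependent_of_dominant_intDegree {ι κ : Type*} (v : ι → κ → RatFunc K)
    (φ : ι → ℤ)
    (h : ∀ c, ∃ r, v c r ≠ 0 ∧ ∀ c', c' ≠ c → v c' r ≠ 0 →
      (v c' r).intDegree + φ c' < (v c r).intDegree + φ c) :
    LinearIndependent (RatFunc K) v := by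
  classical
  rw [linearIndependent_iff]
  intro g hg
  by_contra hne
  obtain ⟨c, hc, hmax⟩ := g.support.exists_max_image (fun i => (g i).intDegree - φ i)
    (Finsupp.support_nonempty_iff.mpr hne)
  obtain ⟨r, hr, hdom⟩ := h c
  have hgc : g c ≠ 0 := Finsupp.mem_support_iff.mp hc
  refine sum_ne_zero_of_intDegree_lt (f := fun i => g i * v i r) hc (mul_ne_zero hgc hr)
    (fun i hi hic hne => ?_) ?_
  · have hgi := left_ne_zero_of_mul hne
    have hvi := right_ne_zero_of_mul hne
    have := hmax i hi
    have := hdom i hic hvi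
    simp only [intDegree_mul hgi hvi, intDegree_mul hgc hr]
    omega
  · simpa [Finsupp.linearCombination_apply, Finsupp.sum] using congrFun hg r

end RatFunc

namespace AII

open RatFunc

lemma qq_ne_zero : qq ≠ 0 := X_ne_zero

lemma intDegree_qq_zpow (a : ℤ) : (qq ^ a).intDegree = a := by
  have hpow (k : ℕ) : (qq ^ k).intDegree = k := by
    rw [qq, ← algebraMap_X, ← map_pow, intDegree_polynomial, Polynomial.natDegree_X_pow]
  rcases a.eq_nat_or_neg with ⟨k, rfl | rfl⟩
  · exact_mod_cast hpow k
  · rw [zpow_neg, intDegree_inv, zpow_natCast, hpow]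

section qint

variable {a : ℤ}

lemma intDegree_neg_qq_zpow_neg_lt (ha : 1 ≤ a) :
    -qq ^ (-a) ≠ 0 → (-qq ^ (-a)).intDegree < (qq ^ a).intDegree := by
  simp only [intDegree_neg, intDegree_qq_zpow]
  omega

lemma qq_zpow_sub_zpow_neg_ne_zero (ha : 1 ≤ a) : qq ^ a - qq ^ (-a) ≠ 0 := by
  rw [sub_eq_add_neg]
  exact add_ne_zero_of_intDegree_lt (zpow_ne_zero _ qq_ne_zero) (intDegree_neg_qq_zpow_neg_lt ha)

lemma intDegree_qq_zpow_sub_zpow_neg (ha : 1 ≤ a) : (qq ^ a - qq ^ (-a)).intDegree = a := by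
  rw [sub_eq_add_neg, intDegree_add_eq_left_of_lt (zpow_ne_zero _ qq_ne_zero)
    (intDegree_neg_qq_zpow_neg_lt ha), intDegree_qq_zpow]

lemma qint_eq_div :
    qint a = (qq ^ a - qq ^ (-a)) / (qq ^ (1 : ℤ) - qq ^ (-1 : ℤ)) := by
  simp [qint]

lemma qint_zero : qint 0 = 0 := by simp [qint]

lemma qint_ne_zero (ha : 1 ≤ a) : qint a ≠ 0 := by
  rw [qint_eq_div]
  exact div_ne_zero (qq_zpow_sub_zpow_neg_ne_zero ha) (qq_zpow_sub_zpow_neg_ne_zero le_rfl)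

lemma intDegree_qint (ha : 1 ≤ a) : (qint a).intDegree = a - 1 := by
  rw [qint_eq_div, intDegree_div (qq_zpow_sub_zpow_neg_ne_zero ha)
    (qq_zpow_sub_zpow_neg_ne_zero le_rfl), intDegree_qq_zpow_sub_zpow_neg ha,
    intDegree_qq_zpow_sub_zpow_neg le_rfl]

end qint

def qratio (e x y z w₁ w₂ : ℤ) : F := qq ^ e * qint x * qint y * qint z / (qint w₁ * qint w₂)

section qratio

variable {e x y z w₁ w₂ : ℤ}

lemma qratio_ne_zero (hx : 1 ≤ x) (hy : 1 ≤ y) (hz : 1 ≤ z) (hw₁ : 1 ≤ w₁) (hw₂ : 1 ≤ w₂) :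
    qratio e x y z w₁ w₂ ≠ 0 := by
  have := qq_ne_zero
  have := qint_ne_zero hx
  have := qint_ne_zero hy
  have := qint_ne_zero hz
  have := qint_ne_zero hw₁
  have := qint_ne_zero hw₂
  unfold qratio
  positivity

lemma intDegree_qratio (hx : 1 ≤ x) (hy : 1 ≤ y) (hz : 1 ≤ z) (hw₁ : 1 ≤ w₁) (hw₂ : 1 ≤ w₂) :
    (qratio e x y z w₁ w₂).intDegree = e + x + y + z - w₁ - w₂ - 1 := by
  have hq := zpow_ne_zero e qq_ne_zero
  have hx' := qint_ne_zero hx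
  have hy' := qint_ne_zero hy
  have hz' := qint_ne_zero hz
  have hw₁' := qint_ne_zero hw₁
  have hw₂' := qint_ne_zero hw₂
  rw [qratio, intDegree_div (by positivity) (by positivity), intDegree_mul (by positivity) hz',
    intDegree_mul (by positivity) hy', intDegree_mul hq hx', intDegree_mul hw₁' hw₂',
    intDegree_qq_zpow, intDegree_qint hx, intDegree_qint hy, intDegree_qint hz,
    intDegree_qint hw₁, intDegree_qint hw₂]
  ring

lemma intDegree_qratio_of_ne_zero (h : qratio e x y z w₁ w₂ ≠ 0) (hx : 0 ≤ x) (hy : 0 ≤ y)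
    (hz : 1 ≤ z) (hw₁ : 1 ≤ w₁) (hw₂ : 1 ≤ w₂) :
    (qratio e x y z w₁ w₂).intDegree = e + x + y + z - w₁ - w₂ - 1 := by
  refine intDegree_qratio ?_ ?_ hz hw₁ hw₂ <;> by_contra! h0 <;> apply h
  · simp [qratio, show x = 0 by omega, qint_zero]
  · simp [qratio, show y = 0 by omega, qint_zero]

end qratio

abbrev Triple (n : ℕ) := (Fin n → ℤ) × (Fin n → ℤ) × (Fin n → ℤ)

def psi (a b c : ℤ) : ℤ := 2 * c * (a + b) - 2 * c ^ 2 - a * b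

def potential {n : ℕ} (d : Triple n) : ℤ :=
  ∑ r, psi (d.1 r) (d.2.1 r) (d.2.2 r)

lemma potential_sub_potential {n : ℕ} {d d' : Triple n} {s t : Fin n} (hst : s ≠ t)
    (h : ∀ r, r ≠ s → r ≠ t → d.1 r = d'.1 r ∧ d.2.1 r = d'.2.1 r ∧ d.2.2 r = d'.2.2 r) :
    potential d - potential d' =
      psi (d.1 s) (d.2.1 s) (d.2.2 s) - psi (d'.1 s) (d'.2.1 s) (d'.2.2 s) +
        (psi (d.1 t) (d.2.1 t) (d.2.2 t) - psi (d'.1 t) (d'.2.1 t) (d'.2.2 t)) := by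
  rw [potential, potential, ← Finset.sum_sub_distrib]
  refine Fintype.sum_eq_add s t hst fun r ⟨hrs, hrt⟩ => ?_
  obtain ⟨h1, h2, h3⟩ := h r hrs hrt
  rw [h1, h2, h3, sub_self]

variable {n : ℕ} [NeZero n]

section entries

variable (l m j : Fin n → ℤ) (s : Fin n)

lemma cA1_eq_qratio : cA1 n l m j s = qratio (j s + j (s + 1) - l (s + 1) - m s - 1)
    (l s - j s) (m (s + 1) - j (s + 1)) (l s + m s - j s + 1) (l s + m s - 2 * j s + 1)
    (l (s + 1) + m (s + 1) - 2 * j (s + 1) + 1) := rfl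

lemma cA2_eq_qratio : cA2 n l m j s = -qratio 0
    (l (s + 1) - j (s + 1)) (m s - j s) (l s + m s - j s + 1) (l s + m s - 2 * j s + 1)
    (l (s + 1) + m (s + 1) - 2 * j (s + 1) + 1) := by
  simp [cA2, sA2, qratio, neg_div]

lemma cA3_eq_qratio : cA3 n l m j s = qratio (j s + j (s + 1) - l s - m s - 1)
    (l (s + 1) - j (s + 1)) (m s - j s) (l (s + 1) + m (s + 1) - j (s + 1) + 1)
    (l s + m s - 2 * j s + 1) (l (s + 1) + m (s + 1) - 2 * j (s + 1) + 1) := rfl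

lemma cA4_eq_qratio : cA4 n l m j s = -qratio
    (2 * j s + 2 * j (s + 1) - l s - l (s + 1) - 2 * m s - 2)
    (l s - j s) (m (s + 1) - j (s + 1)) (l (s + 1) + m (s + 1) - j (s + 1) + 1)
    (l s + m s - 2 * j s + 1) (l (s + 1) + m (s + 1) - 2 * j (s + 1) + 1) := by
  simp [cA4, sA4, qratio, neg_div]

lemma Centry_eq_cA2 {s : Fin n} (hs : s ≠ s + 1) :
    Centry n s l m j l (m - eun n s + eun n (s + 1)) (j + eun n (s + 1)) = cA2 n l m j s := by
  have : l ≠ l - eun n s + eun n (s + 1) := fun h => by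
    have := congrFun h s
    simp only [Pi.add_apply, Pi.sub_apply, eun, ↓reduceIte, hs, add_zero] at this
    omega
  simp [Centry, this]

end entries

section row

variable {l m j : Fin n → ℤ} {s : Fin n} (hj : ∀ t, 0 ≤ j t ∧ j t ≤ min (l t) (m t))
  (hl : j (s + 1) < l (s + 1)) (hm : j s < m s)
include hj hl hm

lemma cA2_ne_zero : cA2 n l m j s ≠ 0 := by
  obtain ⟨hjs0, hjs⟩ := hj s
  obtain ⟨hjt0, hjt⟩ := hj (s + 1)
  simp only [le_min_iff] at hjs hjt
  rw [cA2_eq_qratio, neg_ne_zero]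
  exact qratio_ne_zero (by omega) (by omega) (by omega) (by omega) (by omega)

lemma intDegree_cA2 : (cA2 n l m j s).intDegree = m s - m (s + 1) + j (s + 1) - 2 := by
  obtain ⟨hjs0, hjs⟩ := hj s
  obtain ⟨hjt0, hjt⟩ := hj (s + 1)
  simp only [le_min_iff] at hjs hjt
  rw [cA2_eq_qratio, intDegree_neg,
    intDegree_qratio (by omega) (by omega) (by omega) (by omega) (by omega)]
  ring

lemma intDegree_Centry_add_potential_lt (hs : s ≠ s + 1) {d : Triple n}
    (hd : d ≠ (l, m - eun n s + eun n (s + 1), j + eun n (s + 1)))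
    (h0 : Centry n s l m j d.1 d.2.1 d.2.2 ≠ 0) :
    (Centry n s l m j d.1 d.2.1 d.2.2).intDegree + potential d <
      (cA2 n l m j s).intDegree +
        potential (l, m - eun n s + eun n (s + 1), j + eun n (s + 1)) := by
  rw [intDegree_cA2 hj hl hm]
  suffices potential d - potential (l, m - eun n s + eun n (s + 1), j + eun n (s + 1)) <
      m s - m (s + 1) + j (s + 1) - 2 - (Centry n s l m j d.1 d.2.1 d.2.2).intDegree by
    linarith
  obtain ⟨l', m', j'⟩ := d
  dsimp only at h0 ⊢
  obtain ⟨hjs0, hjs⟩ := hj s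
  obtain ⟨hjt0, hjt⟩ := hj (s + 1)
  simp only [le_min_iff] at hjs hjt
  have hs' := Ne.symm hs
  unfold Centry at h0 ⊢
  split_ifs at h0 ⊢ with h1 h2 h3 h4
  · obtain ⟨rfl, rfl, rfl⟩ := h1
    rw [cA1_eq_qratio] at h0 ⊢
    rw [intDegree_qratio_of_ne_zero h0 (by omega) (by omega) (by omega) (by omega) (by omega),
      potential_sub_potential hs]
    · simp only [psi, Pi.add_apply, Pi.sub_apply, eun, ↓reduceIte, hs, hs', add_zero, sub_zero]
      linarith
    · intro r hr1 hr2
      simp [eun, hr1, hr2]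
  · obtain ⟨rfl, rfl, rfl⟩ := h2
    exact absurd rfl hd
  · obtain ⟨rfl, rfl, rfl⟩ := h3
    rw [cA3_eq_qratio] at h0 ⊢
    rw [intDegree_qratio_of_ne_zero h0 (by omega) (by omega) (by omega) (by omega) (by omega),
      potential_sub_potential hs]
    · simp only [psi, Pi.add_apply, Pi.sub_apply, eun, ↓reduceIte, hs, hs', add_zero, sub_zero]
      linarith
    · intro r hr1 hr2
      simp [eun, hr1, hr2]
  · obtain ⟨rfl, rfl, rfl⟩ := h4
    rw [cA4_eq_qratio, neg_ne_zero] at h0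
    rw [cA4_eq_qratio, intDegree_neg,
      intDegree_qratio_of_ne_zero h0 (by omega) (by omega) (by omega) (by omega) (by omega),
      potential_sub_potential hs]
    · simp only [psi, Pi.add_apply, Pi.sub_apply, eun, ↓reduceIte, hs, hs', add_zero, sub_zero]
      linarith
    · intro r hr1 hr2
      simp [eun, hr1, hr2]
  · exact absurd rfl h0

end row

lemma sum_eun (s : Fin n) : ∑ r, eun n s r = 1 := by simp [eun]

lemma adm_of_adm_A2_column {l m : ℕ} {L M J : Fin n → ℤ} {s : Fin n} (hs : s ≠ s + 1)
    (h : adm n l m L (M - eun n s + eun n (s + 1)) (J + eun n (s + 1))) (hJ : 0 ≤ J (s + 1)) :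
    adm n l m L M J := by
  obtain ⟨hL, hM, hLsum, hMsum, hJM⟩ := h
  refine ⟨hL, fun r => ?_, hLsum, ?_, fun r => ?_⟩
  · have := hM r
    have := hJM r
    simp only [Pi.add_apply, Pi.sub_apply, eun, le_min_iff] at *
    split_ifs at * with h1 h2 h2
    · exact absurd (h1 ▸ h2) hs
    all_goals subst_vars; omega
  · simpa [Finset.sum_add_distrib, Finset.sum_sub_distrib, sum_eun] using hMsum
  · have := hJM r
    simp only [Pi.add_apply, Pi.sub_apply, eun, le_min_iff] at *
    split_ifs at * with h1 h2 h2
    · exact absurd (h2 ▸ h1) hs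
    all_goals subst_vars; omega

abbrev AdmTriple (n : ℕ) [NeZero n] (l m : ℕ) (k : ℤ) :=
  {d : Triple n // adm n l m d.1 d.2.1 d.2.2 ∧ ∑ t, d.2.2 t = k}

def cMatrix (n : ℕ) [NeZero n] (l m j : ℕ) :
    AdmTriple n l m (j + 1) → Fin n × AdmTriple n l m j → F :=
  fun col row => Centry n row.1 row.2.1.1 row.2.1.2.1 row.2.1.2.2 col.1.1 col.1.2.1 col.1.2.2

lemma exists_dominant_row (hn : 2 ≤ n) {l m j : ℕ} (c : AdmTriple n l m (j + 1)) :
    ∃ r, cMatrix n l m j c r ≠ 0 ∧ ∀ c', c' ≠ c → cMatrix n l m j c' r ≠ 0 →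
      (cMatrix n l m j c' r).intDegree + potential c'.1 <
        (cMatrix n l m j c r).intDegree + potential c.1 := by
  obtain ⟨⟨L, M, J⟩, hadm, hJsum⟩ := c
  obtain ⟨s, hJs⟩ : ∃ s : Fin n, 0 < J (s + 1) := by
    by_contra! h
    have : ∑ t, J t ≤ 0 := Finset.sum_nonpos fun t _ => by simpa using h (t - 1)
    dsimp only at hJsum
    omega
  have hs : s ≠ s + 1 := by simp only [ne_eq, left_eq_add, Fin.one_eq_zero_iff]; omega
  obtain ⟨M, rfl⟩ : ∃ M', M = M' - eun n s + eun n (s + 1) :=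
    ⟨M + eun n s - eun n (s + 1), by abel⟩
  obtain ⟨J, rfl⟩ : ∃ J', J = J' + eun n (s + 1) := ⟨J - eun n (s + 1), by abel⟩
  have hJ : 0 ≤ J (s + 1) := by
    simpa only [Pi.add_apply, eun, ↓reduceIte, Order.lt_add_one_iff] using hJs
  have hrow := adm_of_adm_A2_column hs hadm hJ
  have hJM := hadm.2.2.2.2
  have hl : J (s + 1) < L (s + 1) := by
    have := (hJM (s + 1)).2
    simp only [Pi.add_apply, Pi.sub_apply, eun, ↓reduceIte, add_eq_left, Fin.one_eq_zero_iff,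
      le_inf_iff, Order.add_one_le_iff] at this
    omega
  have hm : J s < M s := by
    have := (hJM s).2
    simp only [Pi.add_apply, Pi.sub_apply, eun, ↓reduceIte, hs, add_zero, le_inf_iff] at this
    omega
  refine ⟨(s, ⟨(L, M, J), hrow, by simpa [Finset.sum_add_distrib, sum_eun] using hJsum⟩), ?_,
    fun c' hc' h0 => ?_⟩
  · simpa [cMatrix, Centry_eq_cA2 _ _ _ hs] using cA2_ne_zero hrow.2.2.2.2 hl hm
  · simp only [cMatrix, Centry_eq_cA2 _ _ _ hs] at h0 ⊢
    exact intDegree_Centry_add_potential_lt hrow.2.2.2.2 hl hm hs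
      (fun h => hc' (Subtype.ext h)) h0

theorem statement17_general (n : ℕ) [NeZero n] (hn : 2 ≤ n) (l m : ℕ)
    (j : ℕ) :
    LinearIndependent F
      (fun col : {d : (Fin n → ℤ) × (Fin n → ℤ) × (Fin n → ℤ) //
          adm n l m d.1 d.2.1 d.2.2 ∧ (∑ t, d.2.2 t) = (j : ℤ) + 1} =>
        fun row : Fin n × {d : (Fin n → ℤ) × (Fin n → ℤ) × (Fin n → ℤ) //
            adm n l m d.1 d.2.1 d.2.2 ∧ (∑ t, d.2.2 t) = (j : ℤ)} =>
          Centry n row.1 row.2.1.1 row.2.1.2.1 row.2.1.2.2 col.1.1 col.1.2.1 col.1.2.2) :=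
  linearIndependent_of_dominant_intDegree (cMatrix n l m j) (fun c => potential c.1)
    (exists_dominant_row hn)

/-- Proposition 4.8: the matrix C whose rows are indexed by
(s, 𝒍, 𝒎, 𝒋) with |𝒋| = j and columns by admissible (𝒍', 𝒎', 𝒋') with |𝒋'| = j+1,
with entries the coefficients A_t, has full column rank, i.e. its columns are
linearly independent. -/
theorem statement17 (n : ℕ) [NeZero n] (hn : 2 ≤ n) (l m : ℕ) (hl : 1 ≤ l) (hm : 1 ≤ m)
    (j : ℕ) :
    LinearIndependent F
      (fun col : {d : (Fin n → ℤ) × (Fin n → ℤ) × (Fin n → ℤ) //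
          adm n l m d.1 d.2.1 d.2.2 ∧ (∑ t, d.2.2 t) = (j : ℤ) + 1} =>
        fun row : Fin n × {d : (Fin n → ℤ) × (Fin n → ℤ) × (Fin n → ℤ) //
            adm n l m d.1 d.2.1 d.2.2 ∧ (∑ t, d.2.2 t) = (j : ℤ)} =>
          Centry n row.1 row.2.1.1 row.2.1.2.1 row.2.1.2.2 col.1.1 col.1.2.1 col.1.2.2) :=
  statement17_general n hn l m j

end AII
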